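/- arXiv:2212.07979 — 6 statements merged into one kernel-verified Lean document; each statement's English description precedes it below -/
import Mathlib

section
/- Let R₁ and R₂ be unambiguous regexes over Σ whose languages overlap (so R₁·R₂ is ambiguous). Then the concatenation R₁·R₂ is infinitely ambiguous if and only if there exist words b, d, e, g over Σ such that the word c := d ++ e is nonempty, b ++ c^i ++ d ∈ L(R₁) for every i ∈ ℕ, and e ++ c^j ++ g ∈ L(R₂) for every j ∈ ℕ. (Paper's Theorem 2(a), Ambiguity of Concatenation, stated at the word level: this is the condition that L(R₁) contains the language of a regex BC*D and L(R₂) contains the language of a regex EF*G with ε ∉ L(C), ε ∉ L(F), and L(C) ∩ L(F) ∩ L(DE) ≠ ∅, instantiated at a common witness word c = f = d·e.) -/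
/-! Shared definitions: words, word power, parse trees of regular expressions,
(un)ambiguity, finite/infinite ambiguity, and the Brabrand–Thomsen overlap. -/

universe u

variable {α : Type u}

/-- `wpow w n` is the `n`-fold concatenation `w^n` of the word `w` with itself. -/
def wpow (w : List α) : ℕ → List α
  | 0 => []
  | n + 1 => w ++ wpow w n

/-- Parse trees of a regular expression for a word, defined inductively:
the regex `ε` has a unique parse tree for the empty word; the character regex
for `a` has a unique parse tree for the word `[a]`; a parse tree of `R₁ + R₂`
(alternation) for `w` is a parse tree of `R₁` for `w` or a parse tree of `R₂`
for `w` (the two sides distinct); a parse tree of `R₁ * R₂` (concatenation)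
for `w` is a decomposition `w = u ++ v` with parse trees of `R₁` for `u` and
of `R₂` for `v`; a parse tree of `R*` for `w` is a finite list of words
(possibly empty entries) concatenating to `w` with a parse tree of `R` for each. -/
inductive ParseTree : RegularExpression α → List α → Type u where
  | eps : ParseTree RegularExpression.epsilon []
  | char (a : α) : ParseTree (RegularExpression.char a) [a]
  | plusLeft {R₁ R₂ : RegularExpression α} {w : List α} :
      ParseTree R₁ w → ParseTree (R₁ + R₂) w
  | plusRight {R₁ R₂ : RegularExpression α} {w : List α} :
      ParseTree R₂ w → ParseTree (R₁ + R₂) w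
  | comp {R₁ R₂ : RegularExpression α} {u v : List α} :
      ParseTree R₁ u → ParseTree R₂ v → ParseTree (R₁ * R₂) (u ++ v)
  | starNil {R : RegularExpression α} : ParseTree R.star []
  | starCons {R : RegularExpression α} {u v : List α} :
      ParseTree R u → ParseTree R.star v → ParseTree R.star (u ++ v)

/-- A regex is unambiguous if every word has at most one parse tree of it. -/
def Unambiguous (R : RegularExpression α) : Prop :=
  ∀ (w : List α) (t₁ t₂ : ParseTree R w), t₁ = t₂

/-- A regex is ambiguous if some word has two distinct parse trees of it. -/
def Ambiguous (R : RegularExpression α) : Prop :=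
  ∃ (w : List α) (t₁ t₂ : ParseTree R w), t₁ ≠ t₂

/-- The word `w` has at least `k` distinct parse trees of `R`. -/
def HasAtLeastTrees (R : RegularExpression α) (w : List α) (k : ℕ) : Prop :=
  ∃ l : List (ParseTree R w), l.Nodup ∧ k ≤ l.length

/-- Every word has at most `k` parse trees of `R`. -/
def BoundedBy (R : RegularExpression α) (k : ℕ) : Prop :=
  ∀ (w : List α) (l : List (ParseTree R w)), l.Nodup → l.length ≤ k

/-- `R` is finitely ambiguous: ambiguous, with a uniform bound on the number
of parse trees of any word. -/
def FinitelyAmbiguous (R : RegularExpression α) : Prop :=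
  Ambiguous R ∧ ∃ k : ℕ, BoundedBy R k

/-- `R` is infinitely ambiguous: for every `k` some word has more than `k`
parse trees of `R`. -/
def InfinitelyAmbiguous (R : RegularExpression α) : Prop :=
  ∀ k : ℕ, ∃ w : List α, HasAtLeastTrees R w (k + 1)

/-- Languages `L₁` and `L₂` overlap (nonemptiness of the Brabrand–Thomsen
overlap operator): there are words `x`, `y` and a nonempty word `a` with
`x ∈ L₁`, `x ++ a ∈ L₁`, `a ++ y ∈ L₂`, and `y ∈ L₂`. -/
def Overlaps (L₁ L₂ : Language α) : Prop :=
  ∃ x y a : List α, a ≠ [] ∧ x ∈ L₁ ∧ x ++ a ∈ L₁ ∧ a ++ y ∈ L₂ ∧ y ∈ L₂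

/-! When `R₁` and `R₂` are unambiguous, a parse tree of `R₁ * R₂` for `w` is determined by the
prefix of `w` parsed by `R₁`, so counting parse trees of `w` means counting the prefixes at which
`w` splits into a word of `L(R₁)` followed by a word of `L(R₂)`.

Regular languages have finitely many left quotients (Myhill–Nerode) and, by reversal, finitely
many right quotients. Given more split points than there are pairs of quotients, two of them,
`u` and `u ++ m` with `w = u ++ m ++ v`, have the same left quotient of `L(R₁)` and the same right
quotient of `L(R₂)` at the remaining suffix; hence `u ++ mⁱ ∈ L(R₁)` and `mʲ ++ v ∈ L(R₂)` for all
`i, j`, which is the pumping condition with `b = u`, `d = []`, `e = m`, `g = v`. Conversely, under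
the pumping condition `b ++ cᵏ ++ g` splits after `b ++ cⁱ ++ d` for each of the `k` values `i < k`. -/

open Computability

theorem length_wpow (c : List α) (n : ℕ) : (wpow c n).length = n * c.length := by
  induction n with
  | zero => simp [wpow]
  | succ n ih => simp [wpow, ih, Nat.succ_mul, Nat.add_comm]

theorem wpow_add (c : List α) (m n : ℕ) : wpow c (m + n) = wpow c m ++ wpow c n := by
  induction m with
  | zero => simp [wpow]
  | succ m ih => simp [Nat.succ_add, wpow, ih]

namespace Language

variable {L M : Language α}

theorem leftQuotient_mul (u : List α) :
    (L * M).leftQuotient u =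
      L.leftQuotient u * M + sSup (M.leftQuotient '' {y | ∃ x ∈ L, x ++ y = u}) := by
  ext z
  simp only [mem_add, mem_leftQuotient, mem_mul]
  constructor
  · rintro ⟨p, hp, q, hq, hpq⟩
    rcases List.append_eq_append_iff.mp hpq with ⟨y, rfl, rfl⟩ | ⟨z₁, rfl, rfl⟩
    · exact Or.inr ⟨_, ⟨y, ⟨p, hp, rfl⟩, rfl⟩, hq⟩
    · exact Or.inl ⟨z₁, hp, q, hq, rfl⟩
  · rintro (⟨z₁, hz₁, q, hq, rfl⟩ | ⟨_, ⟨y, ⟨x, hx, rfl⟩, rfl⟩, hz⟩)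
    · exact ⟨u ++ z₁, hz₁, q, hq, List.append_assoc _ _ _⟩
    · exact ⟨x, hx, y ++ z, hz, (List.append_assoc _ _ _).symm⟩

open Classical in
theorem leftQuotient_kstar (u : List α) :
    L∗.leftQuotient u =
      sSup ((L.leftQuotient · * L∗) '' {y | ∃ x ∈ L∗, x ++ y = u}) +
        if u ∈ L∗ then L∗ else 0 := by
  ext z
  simp only [mem_add, mem_leftQuotient]
  constructor
  · intro hz
    obtain ⟨S, hS, hSL⟩ := mem_kstar.mp hz
    rcases List.flatten_eq_append_iff.mp hS.symm with
      ⟨as, bs, rfl, rfl, rfl⟩ | ⟨as, bs, c, cs, ds, rfl, rfl, rfl⟩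
    · right
      rw [if_pos (join_mem_kstar fun y hy => hSL y (by simp [hy]))]
      exact join_mem_kstar fun y hy => hSL y (by simp [hy])
    · left
      refine ⟨_, ⟨bs, ⟨as.flatten, join_mem_kstar fun y hy => hSL y (by simp [hy]), rfl⟩, rfl⟩, ?_⟩
      refine append_mem_mul (hSL _ (by simp) : bs ++ c :: cs ∈ L)
        (join_mem_kstar fun y hy => hSL y (by simp [hy]))
  · rintro (⟨_, ⟨y, ⟨x, hx, rfl⟩, rfl⟩, hz⟩ | hz)
    · obtain ⟨z₁, hz₁, r, hr, rfl⟩ := mem_mul.mp hz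
      have : y ++ z₁ ++ r ∈ L∗ := mul_kstar_le_kstar (a := L) (append_mem_mul hz₁ hr)
      rw [← kstar_mul_kstar L]
      simpa only [List.append_assoc] using append_mem_mul hx this
    · split_ifs at hz with hu
      · rw [← kstar_mul_kstar L]
        exact append_mem_mul hu hz
      · exact absurd hz (notMem_zero z)

theorem IsRegular.of_finite (h : (L : Set (List α)).Finite) : L.IsRegular := by
  have hsuffixes : {z | ∃ w ∈ L, z <:+ w}.Finite :=
    (h.biUnion fun w _ => w.tails.finite_toSet).subset fun z ⟨w, hw, hz⟩ =>
      Set.mem_biUnion hw ((List.mem_tails z w).mpr hz)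
  refine .of_finite_range_leftQuotient (hsuffixes.finite_subsets.subset ?_)
  rintro _ ⟨u, rfl⟩ z hz
  exact ⟨u ++ z, hz, List.suffix_append u z⟩

theorem IsRegular.mul (hL : L.IsRegular) (hM : M.IsRegular) : (L * M).IsRegular := by
  refine .of_finite_range_leftQuotient <|
    (hL.finite_range_leftQuotient.image2 (fun A T => A * M + sSup T)
      hM.finite_range_leftQuotient.finite_subsets).subset ?_
  rintro _ ⟨u, rfl⟩
  exact ⟨_, ⟨u, rfl⟩, _, Set.image_subset_range _ _, (leftQuotient_mul u).symm⟩

theorem IsRegular.kstar (hL : L.IsRegular) : L∗.IsRegular := by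
  classical
  refine .of_finite_range_leftQuotient <|
    (((hL.finite_range_leftQuotient.image (· * L∗)).finite_subsets).image2 (fun T E => sSup T + E)
      (Set.toFinite {L∗, 0})).subset ?_
  rintro _ ⟨u, rfl⟩
  refine ⟨_, ?_, _, ?_, (leftQuotient_kstar u).symm⟩
  · rintro _ ⟨y, -, rfl⟩
    exact ⟨_, ⟨y, rfl⟩, rfl⟩
  · split_ifs <;> simp

def rightQuotient (L : Language α) (v : List α) : Language α := {z | z ++ v ∈ L}

theorem mem_rightQuotient (v z : List α) : z ∈ L.rightQuotient v ↔ z ++ v ∈ L := Iff.rfl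

theorem rightQuotient_append (x y : List α) :
    L.rightQuotient (x ++ y) = (L.rightQuotient y).rightQuotient x := by
  ext z
  simp [mem_rightQuotient]

theorem rightQuotient_eq_reverse_leftQuotient_reverse (v : List α) :
    L.rightQuotient v = (L.reverse.leftQuotient v.reverse).reverse := by
  ext z
  simp [mem_rightQuotient, mem_reverse, mem_leftQuotient]

theorem IsRegular.finite_range_rightQuotient (h : L.IsRegular) :
    (Set.range L.rightQuotient).Finite := by
  refine (h.reverse.finite_range_leftQuotient.image reverse).subset ?_
  rintro _ ⟨v, rfl⟩
  exact ⟨_, ⟨v.reverse, rfl⟩, (rightQuotient_eq_reverse_leftQuotient_reverse v).symm⟩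

end Language

theorem RegularExpression.isRegular_matches' (R : RegularExpression α) :
    R.matches'.IsRegular := by
  induction R with
  | zero => exact .of_finite Set.finite_empty
  | epsilon => exact .of_finite (Set.finite_singleton [])
  | char a => exact .of_finite (Set.finite_singleton [a])
  | plus P Q hP hQ => exact hP.add hQ
  | comp P Q hP hQ => exact hP.mul hQ
  | star P hP => exact hP.kstar

namespace Language

variable {L L₁ L₂ : Language α}

theorem leftQuotient_append_wpow {u m : List α} (h : L.leftQuotient (u ++ m) = L.leftQuotient u)
    (i : ℕ) : L.leftQuotient (u ++ wpow m i) = L.leftQuotient u := by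
  induction i with
  | zero => simp [wpow]
  | succ i ih =>
    rw [wpow, ← List.append_assoc, leftQuotient_append, h, ← leftQuotient_append, ih]

theorem rightQuotient_wpow_append {v m : List α} (h : L.rightQuotient (m ++ v) = L.rightQuotient v)
    (j : ℕ) : L.rightQuotient (wpow m j ++ v) = L.rightQuotient v := by
  induction j with
  | zero => simp [wpow]
  | succ j ih => rw [wpow, List.append_assoc, rightQuotient_append, ih, ← rightQuotient_append, h]

def splitPrefixes (L₁ L₂ : Language α) (w : List α) : Set (List α) :=
  {u | ∃ v, u ++ v = w ∧ u ∈ L₁ ∧ v ∈ L₂}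

theorem exists_pumping_of_quotients_eq {u m v : List α} (hu : u ∈ L₁) (hv : v ∈ L₂) (hm : m ≠ [])
    (hl : L₁.leftQuotient (u ++ m) = L₁.leftQuotient u)
    (hr : L₂.rightQuotient (m ++ v) = L₂.rightQuotient v) :
    ∃ b d e g : List α, d ++ e ≠ [] ∧
      (∀ i : ℕ, b ++ wpow (d ++ e) i ++ d ∈ L₁) ∧
      (∀ j : ℕ, e ++ wpow (d ++ e) j ++ g ∈ L₂) := by
  refine ⟨u, [], m, v, by simpa using hm, fun i => ?_, fun j => ?_⟩
  · have : [] ∈ L₁.leftQuotient (u ++ wpow m i) := by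
      rw [leftQuotient_append_wpow hl]
      simpa [mem_leftQuotient] using hu
    simpa [mem_leftQuotient] using this
  · have : [] ∈ L₂.rightQuotient (wpow m (j + 1) ++ v) := by
      rw [rightQuotient_wpow_append hr]
      simpa [mem_rightQuotient] using hv
    simpa [mem_rightQuotient, wpow] using this

theorem exists_pumping_of_unbounded_splitPrefixes (h₁ : L₁.IsRegular) (h₂ : L₂.IsRegular)
    (h : ∀ N : ℕ, ∃ (w : List α) (P : Finset (List α)),
      ↑P ⊆ splitPrefixes L₁ L₂ w ∧ N < P.card) :
    ∃ b d e g : List α, d ++ e ≠ [] ∧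
      (∀ i : ℕ, b ++ wpow (d ++ e) i ++ d ∈ L₁) ∧
      (∀ j : ℕ, e ++ wpow (d ++ e) j ++ g ∈ L₂) := by
  classical
  let Q := (h₁.finite_range_leftQuotient.prod h₂.finite_range_rightQuotient).toFinset
  obtain ⟨w, P, hP, hcard⟩ := h Q.card
  obtain ⟨u, hu, u', hu', hne, hquot⟩ :=
    Finset.exists_ne_map_eq_of_card_lt_of_maps_to hcard
      (f := fun u => (L₁.leftQuotient u, L₂.rightQuotient (w.drop u.length)))
      (fun u _ => by simp [Q])
  obtain ⟨v, hw, hu₁, hv₂⟩ := hP hu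
  obtain ⟨v', hw', hu₁', hv₂'⟩ := hP hu'
  wlog hpre : u <+: u' generalizing u u' v v'
  · have hpre' := (List.prefix_or_prefix_of_prefix ⟨v, hw⟩ ⟨v', hw'⟩).resolve_left hpre
    exact this u' hu' u hu hne.symm hquot.symm v' hw' hu₁' hv₂' v hw hu₁ hv₂ hpre'
  obtain ⟨m, rfl⟩ := hpre
  have hm : m ≠ [] := by rintro rfl; simp at hne
  subst hw
  obtain rfl : v = m ++ v' := List.append_cancel_left (hw'.symm.trans (List.append_assoc _ _ _))
  simp only [List.drop_left, Prod.mk.injEq] at hquot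
  rw [← List.append_assoc, List.drop_left] at hquot
  exact exists_pumping_of_quotients_eq hu₁ hv₂' hm hquot.1.symm hquot.2

theorem exists_splitPrefixes_card_eq_of_pumping {b d e g : List α} (hc : d ++ e ≠ [])
    (H₁ : ∀ i : ℕ, b ++ wpow (d ++ e) i ++ d ∈ L₁)
    (H₂ : ∀ j : ℕ, e ++ wpow (d ++ e) j ++ g ∈ L₂) (k : ℕ) :
    ∃ P : Finset (List α),
      ↑P ⊆ splitPrefixes L₁ L₂ (b ++ wpow (d ++ e) k ++ g) ∧ P.card = k := by
  classical
  refine ⟨(Finset.range k).image fun i => b ++ wpow (d ++ e) i ++ d, ?_, ?_⟩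
  · simp only [Finset.coe_image, Finset.coe_range, Set.image_subset_iff]
    intro i hi
    obtain ⟨j, rfl⟩ := Nat.exists_eq_add_of_lt hi
    refine ⟨e ++ wpow (d ++ e) j ++ g, ?_, H₁ i, H₂ j⟩
    rw [show i + j + 1 = i + (j + 1) from rfl, wpow_add]
    simp [wpow]
  · rw [Finset.card_image_of_injective _ fun i i' h => ?_, Finset.card_range]
    have hlen := congrArg List.length h
    simp only [List.length_append, length_wpow] at hlen
    have hpos : 0 < (d ++ e).length := List.length_pos_iff.mpr hc
    exact Nat.eq_of_mul_eq_mul_right hpos (by simp only [List.length_append]; omega)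

end Language

namespace ParseTree

variable {R R₁ R₂ : RegularExpression α} {u v w : List α}

theorem mem_matches' (t : ParseTree R w) : w ∈ R.matches' := by
  induction t with
  | eps => exact Language.nil_mem_one
  | char a => exact rfl
  | plusLeft _ ih => exact Or.inl ih
  | plusRight _ ih => exact Or.inr ih
  | comp _ _ ih₁ ih₂ => exact Language.append_mem_mul ih₁ ih₂
  | starNil => exact Language.nil_mem_kstar _
  | @starCons P _ _ _ _ ih ihs =>
    exact mul_kstar_le_kstar (a := P.matches') (Language.append_mem_mul ih ihs)

theorem nonempty_of_mem_matches' (R : RegularExpression α) {w : List α} (h : w ∈ R.matches') :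
    Nonempty (ParseTree R w) := by
  induction R generalizing w with
  | zero => exact absurd h (Language.notMem_zero w)
  | epsilon =>
    obtain rfl : w = [] := h
    exact ⟨eps⟩
  | char a =>
    obtain rfl : w = [a] := h
    exact ⟨char a⟩
  | plus P Q ihP ihQ =>
    rcases h with h | h
    · exact (ihP h).map plusLeft
    · exact (ihQ h).map plusRight
  | comp P Q ihP ihQ =>
    obtain ⟨u, hu, v, hv, rfl⟩ := Language.mem_mul.mp h
    exact ⟨comp (ihP hu).some (ihQ hv).some⟩
  | star P ih =>
    obtain ⟨S, rfl, hS⟩ := Language.mem_kstar.mp h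
    clear h
    induction S with
    | nil => exact ⟨starNil⟩
    | cons s S ihS =>
      exact ⟨starCons (ih (hS s (by simp))).some (ihS fun y hy => hS y (by simp [hy])).some⟩

def splitPrefix : ParseTree (R₁ * R₂) w → List α
  | comp (u := u) _ _ => u

theorem exists_eq_cast_comp (t : ParseTree (R₁ * R₂) w) :
    ∃ (u v : List α) (h : u ++ v = w) (t₁ : ParseTree R₁ u) (t₂ : ParseTree R₂ v),
      t = h ▸ comp t₁ t₂ := by
  cases t with
  | comp t₁ t₂ => exact ⟨_, _, rfl, t₁, t₂, rfl⟩

theorem splitPrefix_cast_comp (h : u ++ v = w) (t₁ : ParseTree R₁ u) (t₂ : ParseTree R₂ v) :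
    (h ▸ comp t₁ t₂ : ParseTree (R₁ * R₂) w).splitPrefix = u := by
  subst h
  rfl

theorem splitPrefix_mem_splitPrefixes (t : ParseTree (R₁ * R₂) w) :
    t.splitPrefix ∈ Language.splitPrefixes R₁.matches' R₂.matches' w := by
  obtain ⟨u, v, h, t₁, t₂, rfl⟩ := exists_eq_cast_comp t
  rw [splitPrefix_cast_comp]
  exact ⟨v, h, t₁.mem_matches', t₂.mem_matches'⟩

theorem exists_splitPrefix_eq (hu : u ∈ Language.splitPrefixes R₁.matches' R₂.matches' w) :
    ∃ t : ParseTree (R₁ * R₂) w, t.splitPrefix = u := by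
  obtain ⟨v, h, hu, hv⟩ := hu
  exact ⟨h ▸ comp (nonempty_of_mem_matches' R₁ hu).some (nonempty_of_mem_matches' R₂ hv).some,
    splitPrefix_cast_comp _ _ _⟩

theorem splitPrefix_injective (h₁ : Unambiguous R₁) (h₂ : Unambiguous R₂) :
    Function.Injective (splitPrefix : ParseTree (R₁ * R₂) w → List α) := by
  intro t t' hsplit
  obtain ⟨u, v, h, t₁, t₂, rfl⟩ := exists_eq_cast_comp t
  obtain ⟨u', v', h', t₁', t₂', rfl⟩ := exists_eq_cast_comp t'
  rw [splitPrefix_cast_comp, splitPrefix_cast_comp] at hsplit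
  subst hsplit
  obtain rfl : v = v' := List.append_cancel_left (h.trans h'.symm)
  rw [h₁ u t₁ t₁', h₂ v t₂ t₂']

end ParseTree

theorem hasAtLeastTrees_mul_of_subset_splitPrefixes {R₁ R₂ : RegularExpression α} {w : List α}
    (P : Finset (List α)) (hP : ↑P ⊆ Language.splitPrefixes R₁.matches' R₂.matches' w) :
    HasAtLeastTrees (R₁ * R₂) w P.card := by
  have htree : ∀ u ∈ P.toList, ∃ t : ParseTree (R₁ * R₂) w, t.splitPrefix = u :=
    fun u hu => ParseTree.exists_splitPrefix_eq (hP (Finset.mem_toList.mp hu))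
  choose f hf using htree
  refine ⟨P.toList.pmap f fun _ => id, ?_, by simp⟩
  exact P.nodup_toList.pmap fun u hu u' hu' h =>
    (hf u hu).symm.trans ((congrArg _ h).trans (hf u' hu'))

theorem HasAtLeastTrees.exists_subset_splitPrefixes {R₁ R₂ : RegularExpression α} {w : List α}
    {k : ℕ} (h₁ : Unambiguous R₁) (h₂ : Unambiguous R₂) (h : HasAtLeastTrees (R₁ * R₂) w k) :
    ∃ P : Finset (List α), ↑P ⊆ Language.splitPrefixes R₁.matches' R₂.matches' w ∧ k ≤ P.card := by
  classical
  obtain ⟨l, hnd, hlen⟩ := h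
  refine ⟨(l.map ParseTree.splitPrefix).toFinset, ?_, ?_⟩
  · intro u hu
    obtain ⟨t, -, rfl⟩ := List.mem_map.mp (List.mem_toFinset.mp hu)
    exact t.splitPrefix_mem_splitPrefixes
  · rwa [List.toFinset_card_of_nodup (hnd.map (ParseTree.splitPrefix_injective h₁ h₂)), List.length_map]

theorem stmt_2_general {α : Type u} (R₁ R₂ : RegularExpression α)
    (h₁ : Unambiguous R₁) (h₂ : Unambiguous R₂) :
    InfinitelyAmbiguous (R₁ * R₂) ↔
      ∃ b d e g : List α, d ++ e ≠ [] ∧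
        (∀ i : ℕ, b ++ wpow (d ++ e) i ++ d ∈ R₁.matches') ∧
        (∀ j : ℕ, e ++ wpow (d ++ e) j ++ g ∈ R₂.matches') := by
  constructor
  · intro h
    refine Language.exists_pumping_of_unbounded_splitPrefixes R₁.isRegular_matches'
      R₂.isRegular_matches' fun N => ?_
    obtain ⟨w, hw⟩ := h N
    obtain ⟨P, hP, hcard⟩ := hw.exists_subset_splitPrefixes h₁ h₂
    exact ⟨w, P, hP, hcard⟩
  · rintro ⟨b, d, e, g, hc, H₁, H₂⟩ k
    obtain ⟨P, hP, hcard⟩ := Language.exists_splitPrefixes_card_eq_of_pumping hc H₁ H₂ (k + 1)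
    exact ⟨_, hcard ▸ hasAtLeastTrees_mul_of_subset_splitPrefixes P hP⟩

/-- Theorem 2(a): for unambiguous `R₁`, `R₂` with overlapping languages,
`R₁·R₂` is infinitely ambiguous iff there are words `b d e g` with
`c := d ++ e` nonempty, `b ++ c^i ++ d ∈ L(R₁)` for all `i`, and
`e ++ c^j ++ g ∈ L(R₂)` for all `j`. -/
theorem stmt_2 {α : Type u} (R₁ R₂ : RegularExpression α)
    (h₁ : Unambiguous R₁) (h₂ : Unambiguous R₂)
    (hov : Overlaps R₁.matches' R₂.matches') :
    InfinitelyAmbiguous (R₁ * R₂) ↔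
      ∃ b d e g : List α, d ++ e ≠ [] ∧
        (∀ i : ℕ, b ++ wpow (d ++ e) i ++ d ∈ R₁.matches') ∧
        (∀ j : ℕ, e ++ wpow (d ++ e) j ++ g ∈ R₂.matches') :=
  stmt_2_general R₁ R₂ h₁ h₂
end

section
/- If R is a finitely ambiguous regex over Σ, then the star R* is infinitely ambiguous. (Paper's Theorem 4.) -/
/-! Shared definitions: words, word power, parse trees of regular expressions,
(un)ambiguity, finite/infinite ambiguity, and the Brabrand–Thomsen overlap. -/

universe u

variable {α : Type u}

/-! If `t₁ ≠ t₂` are two parse trees of `R` for `w`, then for each `i ≤ k` the parse tree of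
`R*` for `w^k` made of `i` copies of `t₁` followed by `k - i` copies of `t₂` is a different
one, so `w^k` has at least `k + 1` parse trees of `R*`. -/

namespace ParseTree

variable {R : RegularExpression α} {w : List α}

def mixedStar (t₁ t₂ : ParseTree R w) : ℕ → (k : ℕ) → ParseTree R.star (wpow w k)
  | _, 0 => .starNil
  | 0, k + 1 => .starCons t₂ (mixedStar t₁ t₂ 0 k)
  | i + 1, k + 1 => .starCons t₁ (mixedStar t₁ t₂ i k)

theorem mixedStar_injOn {t₁ t₂ : ParseTree R w} (hne : t₁ ≠ t₂) (k : ℕ) :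
    Set.InjOn (fun i => mixedStar t₁ t₂ i k) (Set.Iic k) := by
  induction k with
  | zero =>
    intro i hi j hj _
    exact (Nat.le_zero.1 hi).trans (Nat.le_zero.1 hj).symm
  | succ k ih =>
    rintro (_ | i) hi (_ | j) hj heq
    · rfl
    · injection heq with _ _ _ hhead
      exact absurd hhead.symm hne
    · injection heq with _ _ _ hhead
      exact absurd hhead hne
    · injection heq with _ _ _ _ htail
      exact congrArg Nat.succ (ih (Nat.le_of_succ_le_succ hi) (Nat.le_of_succ_le_succ hj) htail)

end ParseTree

theorem Ambiguous.infinitelyAmbiguous_star {R : RegularExpression α}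
    (h : Ambiguous R) : InfinitelyAmbiguous R.star := by
  obtain ⟨w, t₁, t₂, hne⟩ := h
  intro k
  refine ⟨wpow w k, (List.range (k + 1)).map (fun i => t₁.mixedStar t₂ i k), ?_, by simp⟩
  exact List.nodup_range.map_on fun i hi j hj => ParseTree.mixedStar_injOn hne k
    (Nat.lt_succ_iff.1 (List.mem_range.1 hi)) (Nat.lt_succ_iff.1 (List.mem_range.1 hj))

/-- Theorem 4: if `R` is finitely ambiguous then `R*` is infinitely
ambiguous. -/
theorem stmt_6 {α : Type u} (R : RegularExpression α)
    (h : FinitelyAmbiguous R) : InfinitelyAmbiguous R.star :=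
  h.1.infinitelyAmbiguous_star
end

section
/- Let R₁ and R₂ be unambiguous regexes over Σ. Then the concatenation R₁·R₂ is unambiguous if and only if the languages L(R₁) and L(R₂) do not overlap. (Brabrand–Thomsen Theorem 0(b), as stated in the paper.) -/
/-! Shared definitions: words, word power, parse trees of regular expressions,
(un)ambiguity, finite/infinite ambiguity, and the Brabrand–Thomsen overlap. -/

universe u

variable {α : Type u}

/-- Every parse tree witnesses membership in the matched language. -/
theorem mem_matches'_of_parseTree {α : Type u} :
    ∀ {R : RegularExpression α} {w : List α}, ParseTree R w → w ∈ R.matches' := by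
  intro R w t
  induction t with
  | eps => simp [RegularExpression.matches']
  | char a => exact rfl
  | plusLeft t ih => exact Or.inl ih
  | plusRight t ih => exact Or.inr ih
  | comp t₁ t₂ ih₁ ih₂ => exact Language.mem_mul.2 ⟨_, ih₁, _, ih₂, rfl⟩
  | starNil => exact Language.mem_kstar.2 ⟨[], rfl, by simp⟩
  | @starCons R u v t₁ t₂ ih₁ ih₂ =>
      rcases Language.mem_kstar.1 ih₂ with ⟨L, hL, hmem⟩
      exact Language.mem_kstar.2 ⟨u :: L, by simp [hL], by
        intro y hy
        rcases List.mem_cons.1 hy with h | h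
        · exact h ▸ ih₁
        · exact hmem y h⟩

/-- Membership yields a parse tree. -/
theorem parseTree_of_mem {α : Type u} :
    ∀ (R : RegularExpression α) (w : List α), w ∈ R.matches' → Nonempty (ParseTree R w) := by
  intro R
  induction R with
  | zero => intro w hw; simp [RegularExpression.matches'] at hw
  | epsilon =>
      intro w hw
      simp [RegularExpression.matches'] at hw
      exact hw ▸ ⟨ParseTree.eps⟩
  | char a =>
      intro w hw
      simp [RegularExpression.matches'] at hw
      exact hw ▸ ⟨ParseTree.char a⟩
  | plus P Q ihP ihQ =>
      intro w hw
      rcases hw with h | h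
      · exact ⟨ParseTree.plusLeft (ihP w h).some⟩
      · exact ⟨ParseTree.plusRight (ihQ w h).some⟩
  | comp P Q ihP ihQ =>
      intro w hw
      rcases Language.mem_mul.1 hw with ⟨u, hu, v, hv, rfl⟩
      exact ⟨ParseTree.comp (ihP u hu).some (ihQ v hv).some⟩
  | star P ih =>
      intro w hw
      rcases Language.mem_kstar.1 hw with ⟨L, rfl, hmem⟩
      clear hw
      induction L with
      | nil => exact ⟨ParseTree.starNil⟩
      | cons u L ihL =>
          have h1 : u ∈ P.matches' := hmem u (by simp)
          have h2 : Nonempty (ParseTree P.star L.flatten) :=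
            ihL (fun y hy => hmem y (List.mem_cons_of_mem _ hy))
          exact ⟨ParseTree.starCons (ih u h1).some h2.some⟩

/-- The length of the left component of a concatenation parse tree. -/
def leftLen {α : Type u} {R₁ R₂ : RegularExpression α} :
    {w : List α} → ParseTree (R₁ * R₂) w → ℕ
  | _, ParseTree.comp (u := u) _ _ => u.length

theorem leftLen_congr {α : Type u} {R₁ R₂ : RegularExpression α} {w w' : List α}
    (h : w = w') (t : ParseTree (R₁ * R₂) w) (t' : ParseTree (R₁ * R₂) w')
    (ht : HEq t t') : leftLen t = leftLen t' := by
  subst h; cases ht; rfl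

theorem comp_inv {α : Type u} {R₁ R₂ : RegularExpression α} {w : List α}
    (t : ParseTree (R₁ * R₂) w) :
    ∃ (u v : List α) (t₁ : ParseTree R₁ u) (t₂ : ParseTree R₂ v),
      w = u ++ v ∧ HEq t (ParseTree.comp t₁ t₂) := by
  cases t with
  | comp t₁ t₂ => exact ⟨_, _, t₁, t₂, rfl, HEq.rfl⟩

theorem comp_heq {α : Type u} {R₁ R₂ : RegularExpression α} {u v u' v' : List α}
    (t₁ : ParseTree R₁ u) (t₂ : ParseTree R₂ v)
    (s₁ : ParseTree R₁ u') (s₂ : ParseTree R₂ v')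
    (hu : u = u') (hv : v = v') (h1 : HEq t₁ s₁) (h2 : HEq t₂ s₂) :
    HEq (ParseTree.comp t₁ t₂) (ParseTree.comp s₁ s₂) := by
  subst hu; subst hv; cases h1; cases h2; rfl

/-- Brabrand–Thomsen Theorem 0(b): for unambiguous `R₁`, `R₂`, the
concatenation `R₁·R₂` is unambiguous iff `L(R₁)` and `L(R₂)` do not
overlap. -/
theorem stmt_8 {α : Type u} (R₁ R₂ : RegularExpression α)
    (h₁ : Unambiguous R₁) (h₂ : Unambiguous R₂) :
    Unambiguous (R₁ * R₂) ↔ ¬ Overlaps R₁.matches' R₂.matches' := by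
  constructor
  · -- unambiguous → no overlap
    intro hU ⟨x, y, a, ha, hx, hxa, hay, hy⟩
    obtain ⟨tx⟩ := parseTree_of_mem R₁ x hx
    obtain ⟨txa⟩ := parseTree_of_mem R₁ (x ++ a) hxa
    obtain ⟨tay⟩ := parseTree_of_mem R₂ (a ++ y) hay
    obtain ⟨ty⟩ := parseTree_of_mem R₂ y hy
    have hw : (x ++ a) ++ y = x ++ (a ++ y) := by simp
    have heq : ParseTree.comp tx tay = hw ▸ ParseTree.comp txa ty := hU _ _ _
    have hheq : HEq (hw ▸ ParseTree.comp txa ty : ParseTree (R₁ * R₂) (x ++ (a ++ y)))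
        (ParseTree.comp txa ty) := eqRec_heq _ _
    have hlen : x.length = (x ++ a).length := by
      have h := leftLen_congr hw.symm _ _ hheq
      calc x.length = leftLen (ParseTree.comp tx tay) := rfl
        _ = leftLen (hw ▸ ParseTree.comp txa ty) := by rw [heq]
        _ = leftLen (ParseTree.comp txa ty) := h
        _ = (x ++ a).length := rfl
    rw [List.length_append] at hlen
    have : a.length = 0 := by omega
    exact ha (List.length_eq_zero_iff.1 this)
  · -- no overlap → unambiguous
    intro hno w t t'
    obtain ⟨u, v, t₁, t₂, hw, ht⟩ := comp_inv t
    obtain ⟨u', v', s₁, s₂, hw', ht'⟩ := comp_inv t'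
    have hsplit : u ++ v = u' ++ v' := by rw [← hw, ← hw']
    have huu : u = u' := by
      rcases List.append_eq_append_iff.1 hsplit with ⟨c, hc1, hc2⟩ | ⟨c, hc1, hc2⟩
      · -- u' = u ++ c, v = c ++ v'
        by_cases hc : c = []
        · simp [hc1, hc]
        · exfalso
          exact hno ⟨u, v', c, hc,
            mem_matches'_of_parseTree t₁, hc1 ▸ mem_matches'_of_parseTree s₁,
            hc2 ▸ mem_matches'_of_parseTree t₂, mem_matches'_of_parseTree s₂⟩
      · -- u = u' ++ c, v' = c ++ v
        by_cases hc : c = []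
        · simp [hc1, hc]
        · exfalso
          exact hno ⟨u', v, c, hc,
            mem_matches'_of_parseTree s₁, hc1 ▸ mem_matches'_of_parseTree t₁,
            hc2 ▸ mem_matches'_of_parseTree s₂, mem_matches'_of_parseTree t₂⟩
    have hvv : v = v' := by
      subst huu
      exact List.append_cancel_left hsplit
    have : HEq t t' := by
      refine ht.trans (HEq.trans ?_ ht'.symm)
      exact comp_heq t₁ t₂ s₁ s₂ huu hvv
        (heq_of_eq (h₁ _ t₁ (huu ▸ s₁)) |>.trans (by subst huu; rfl))
        (heq_of_eq (h₂ _ t₂ (hvv ▸ s₂)) |>.trans (by subst hvv; rfl))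
    exact eq_of_heq this
end

section
/- Let R be an unambiguous regex over Σ. Then the star R* is unambiguous if and only if ε ∉ L(R) and the languages L(R) and L(R*) do not overlap. (Brabrand–Thomsen Theorem 0(c), as stated in the paper.) -/
/-! Shared definitions: words, word power, parse trees of regular expressions,
(un)ambiguity, finite/infinite ambiguity, and the Brabrand–Thomsen overlap. -/

universe u

variable {α : Type u}

theorem tree_mem {R : RegularExpression α} {w : List α} (t : ParseTree R w) :
    w ∈ R.matches' := by
  induction t with
  | eps => exact Language.nil_mem_one
  | char a => exact rfl
  | plusLeft t ih => exact Or.inl ih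
  | plusRight t ih => exact Or.inr ih
  | comp t₁ t₂ ih₁ ih₂ => exact Language.append_mem_mul ih₁ ih₂
  | starNil => exact Language.nil_mem_kstar _
  | starCons t s iht ihs =>
      rw [RegularExpression.matches'_star, Language.mem_kstar] at ihs ⊢
      obtain ⟨L, rfl, hL⟩ := ihs
      refine ⟨_ :: L, rfl, fun y hy => ?_⟩
      rcases List.mem_cons.mp hy with rfl | hy
      · exact iht
      · exact hL y hy

theorem mem_tree {R : RegularExpression α} {w : List α} (hw : w ∈ R.matches') :
    Nonempty (ParseTree R w) := by
  induction R generalizing w with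
  | zero => exact absurd hw (by simp [RegularExpression.matches'])
  | epsilon => obtain rfl : w = [] := (Language.mem_one _).mp hw; exact ⟨.eps⟩
  | char a => obtain rfl : w = [a] := hw; exact ⟨.char a⟩
  | plus P Q ihP ihQ =>
      rcases hw with h | h
      · exact (ihP h).elim fun t => ⟨.plusLeft t⟩
      · exact (ihQ h).elim fun t => ⟨.plusRight t⟩
  | comp P Q ihP ihQ =>
      obtain ⟨u, hu, v, hv, rfl⟩ := Language.mem_mul.mp hw
      exact (ihP hu).elim fun t => (ihQ hv).elim fun s => ⟨.comp t s⟩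
  | star P ih =>
      rw [RegularExpression.matches'_star, Language.mem_kstar] at hw
      obtain ⟨L, rfl, hL⟩ := hw
      induction L with
      | nil => exact ⟨.starNil⟩
      | cons a L ihL =>
          exact (ih (hL a (by simp))).elim fun t =>
            (ihL (fun y hy => hL y (by simp [hy]))).elim fun s => ⟨.starCons t s⟩

def nChunks : {R : RegularExpression α} → {w : List α} → ParseTree R w → ℕ
  | _, _, .starCons _ s => nChunks s + 1
  | _, _, _ => 0

def headChunk : {R : RegularExpression α} → {w : List α} → ParseTree R w → List α
  | _, _, .starCons (u := u) _ _ => u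
  | _, _, _ => []

theorem nChunks_nil {R : RegularExpression α} :
    nChunks (.starNil : ParseTree R.star []) = 0 := rfl

theorem nChunks_cons {R : RegularExpression α} {u v : List α}
    (t : ParseTree R u) (s : ParseTree R.star v) :
    nChunks (t.starCons s) = nChunks s + 1 := rfl

theorem headChunk_cons {R : RegularExpression α} {u v : List α}
    (t : ParseTree R u) (s : ParseTree R.star v) :
    headChunk (t.starCons s) = u := rfl

theorem headChunk_cast {R : RegularExpression α} {w w' : List α} (e : w = w')
    (t : ParseTree R w) : headChunk (e ▸ t) = headChunk t := by subst e; rfl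

theorem star_heq {R : RegularExpression α} (h : Unambiguous R)
    (hε : [] ∉ R.matches')
    (hov : ¬ Overlaps R.matches' R.star.matches') :
    ∀ (n : ℕ) (w₁ : List α), w₁.length ≤ n →
      ∀ (t₁ : ParseTree R.star w₁) (w₂ : List α) (t₂ : ParseTree R.star w₂),
        w₁ = w₂ → HEq t₁ t₂ := by
  intro n
  induction n with
  | zero =>
      intro w₁ hw t₁ w₂ t₂ e
      cases t₁ with
      | starNil =>
          cases t₂ with
          | starNil => exact HEq.rfl
          | starCons t' s' =>
              obtain ⟨rfl, -⟩ := List.append_eq_nil_iff.mp e.symm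
              exact absurd (tree_mem t') hε
      | starCons t s =>
          rename_i u v
          rw [List.length_append] at hw
          have hu : u = [] := List.eq_nil_of_length_eq_zero (by omega)
          exact absurd (hu ▸ tree_mem t) hε
  | succ n ih =>
      intro w₁ hw t₁ w₂ t₂ e
      cases t₁ with
      | starNil =>
          cases t₂ with
          | starNil => exact HEq.rfl
          | starCons t' s' =>
              obtain ⟨rfl, -⟩ := List.append_eq_nil_iff.mp e.symm
              exact absurd (tree_mem t') hε
      | starCons t s =>
          rename_i u v
          have hu : u ≠ [] := fun hu => absurd (hu ▸ tree_mem t) hε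
          cases t₂ with
          | starNil =>
              obtain ⟨rfl, -⟩ := List.append_eq_nil_iff.mp e
              exact absurd rfl hu
          | starCons t' s' =>
              rename_i u' v'
              rcases List.append_eq_append_iff.mp e with ⟨a, ha1, ha2⟩ | ⟨a, ha1, ha2⟩
              · rcases eq_or_ne a [] with rfl | hne
                · rw [List.append_nil] at ha1
                  rw [List.nil_append] at ha2
                  subst ha1
                  subst ha2
                  have hv : v.length ≤ n := by
                    rw [List.length_append] at hw
                    have : 0 < u'.length := List.length_pos_iff.mpr hu
                    omega
                  have : s = s' := eq_of_heq (ih v hv s v s' rfl)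
                  rw [h u' t t', this]
                · exact absurd ⟨u, v', a, hne, tree_mem t, ha1 ▸ tree_mem t',
                    ha2 ▸ tree_mem s, tree_mem s'⟩ hov
              · rcases eq_or_ne a [] with rfl | hne
                · rw [List.append_nil] at ha1
                  rw [List.nil_append] at ha2
                  subst ha1
                  subst ha2
                  have hv : v'.length ≤ n := by
                    rw [List.length_append] at hw
                    have : 0 < u.length := List.length_pos_iff.mpr hu
                    omega
                  have : s = s' := eq_of_heq (ih v' hv s v' s' rfl)
                  rw [h u t t', this]
                · exact absurd ⟨u', v, a, hne, tree_mem t', ha1 ▸ tree_mem t,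
                    ha2 ▸ tree_mem s', tree_mem s⟩ hov

/-- Brabrand–Thomsen Theorem 0(c): for unambiguous `R`, the star `R*` is
unambiguous iff `ε ∉ L(R)` and `L(R)` and `L(R*)` do not overlap. -/
theorem stmt_9 {α : Type u} (R : RegularExpression α) (h : Unambiguous R) :
    Unambiguous R.star ↔
      ([] ∉ R.matches' ∧ ¬ Overlaps R.matches' R.star.matches') := by
  constructor
  · intro hstar
    constructor
    · intro hε
      obtain ⟨t⟩ := mem_tree hε
      have heq := hstar [] .starNil (.starCons t .starNil)
      have := congrArg nChunks heq
      rw [nChunks_nil, nChunks_cons] at this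
      simp at this
    · rintro ⟨x, y, a, hne, hx, hxa, hay, hy⟩
      obtain ⟨tx⟩ := mem_tree hx
      obtain ⟨txa⟩ := mem_tree hxa
      obtain ⟨say⟩ := mem_tree hay
      obtain ⟨sy⟩ := mem_tree hy
      have e : (x ++ a) ++ y = x ++ (a ++ y) := List.append_assoc x a y
      have heq := hstar _ (.starCons tx say) (e ▸ .starCons txa sy)
      have hh := congrArg headChunk heq
      rw [headChunk_cast] at hh
      rw [headChunk_cons, headChunk_cons] at hh
      have : x = x ++ a := hh
      have := congrArg List.length this
      rw [List.length_append] at this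
      have : 0 < a.length := List.length_pos_iff.mpr hne
      omega
  · rintro ⟨hε, hov⟩
    intro w t₁ t₂
    exact eq_of_heq (star_heq h hε hov w.length w le_rfl t₁ w t₂ rfl)
end

section
/- Let R be a regex over Σ, s a word, and k ≥ 1 a natural number. If s has at least k distinct parse trees of R, then for every n ∈ ℕ the word s^n has at least k^n distinct parse trees of R*. (Counting claim from the proof of the paper's Theorem 4.) -/
/-! Shared definitions: words, word power, parse trees of regular expressions,
(un)ambiguity, finite/infinite ambiguity, and the Brabrand–Thomsen overlap. -/

universe u

variable {α : Type u}

theorem ParseTree.starCons_injective2 {R : RegularExpression α} {u v : List α} :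
    Function.Injective2 (@ParseTree.starCons α R u v) := fun _ _ _ _ h =>
  ParseTree.starCons.inj h

theorem HasAtLeastTrees.star_nil (R : RegularExpression α) :
    HasAtLeastTrees R.star [] 1 :=
  ⟨[ParseTree.starNil], List.nodup_singleton _, le_rfl⟩

theorem HasAtLeastTrees.star_cons {R : RegularExpression α} {u v : List α} {a b : ℕ}
    (hu : HasAtLeastTrees R u a) (hv : HasAtLeastTrees R.star v b) :
    HasAtLeastTrees R.star (u ++ v) (a * b) := by
  obtain ⟨l, hl, hla⟩ := hu
  obtain ⟨L, hL, hLb⟩ := hv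
  refine ⟨(l ×ˢ L).map (Function.uncurry ParseTree.starCons), ?_, ?_⟩
  · exact (hl.product hL).map ParseTree.starCons_injective2.uncurry
  · simpa only [List.length_map, List.length_product] using Nat.mul_le_mul hla hLb

theorem stmt_13_general {α : Type u} (R : RegularExpression α) (s : List α) (k : ℕ)
    (h : HasAtLeastTrees R s k) :
    ∀ n : ℕ, HasAtLeastTrees R.star (wpow s n) (k ^ n) := by
  intro n
  induction n with
  | zero => exact HasAtLeastTrees.star_nil R
  | succ n ih => rw [pow_succ']; exact h.star_cons ih

/-- Counting claim from the proof of Theorem 4: if `s` has at least `k ≥ 1`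
distinct parse trees of `R`, then for every `n` the word `s^n` has at least
`k^n` distinct parse trees of `R*`. -/
theorem stmt_13 {α : Type u} (R : RegularExpression α) (s : List α) (k : ℕ)
    (hk : 1 ≤ k) (h : HasAtLeastTrees R s k) :
    ∀ n : ℕ, HasAtLeastTrees R.star (wpow s n) (k ^ n) :=
  stmt_13_general R s k h
end

section
/- Let R be a regex over Σ, w a word, and k ∈ ℕ. If w has at least k distinct parse trees of R*, then the word w ++ w has at least k² distinct parse trees of R*. (Claim from the proof sketch of the paper's Theorem 3: if an input can be matched in k ways by R*, then its doubling can be matched in k·k ways.) -/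
/-! Shared definitions: words, word power, parse trees of regular expressions,
(un)ambiguity, finite/infinite ambiguity, and the Brabrand–Thomsen overlap. -/

universe u

variable {α : Type u}

/-! If `R` has a parse tree `e` of the empty word, prefixing any parse tree of `R*` with copies
of `e` gives infinitely many parse trees of `R*` for every word of `L(R*)`, in particular for
`w ++ w`. Otherwise every piece of a parse tree of `R*` is a nonempty word, so a parse tree of
`R*` for `u ++ v` built by concatenating one for `u` and one for `v` remembers where `u` ends:
concatenation is injective on pairs, and `k` trees for `w` give `k²` trees for `w ++ w`. -/

theorem List.eq_of_prefix_of_flatten_map_eq {γ β : Type*} {f : γ → List β} {L₁ L₂ : List γ}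
    (hpre : L₁ <+: L₂) (hne : ∀ x ∈ L₂, f x ≠ [])
    (hflat : (L₁.map f).flatten = (L₂.map f).flatten) : L₁ = L₂ := by
  obtain ⟨D, rfl⟩ := hpre
  suffices D = [] by rw [this, List.append_nil]
  rcases D with _ | ⟨x, D⟩
  · rfl
  · simp only [List.map_append, List.flatten_append, List.self_eq_append_right,
      List.flatten_eq_nil_iff] at hflat
    exact absurd (hflat (f x) (by simp)) (hne x (by simp))

namespace ParseTree

variable {R : RegularExpression α}

def pieces : {w : List α} → ParseTree R.star w → List ((u : List α) × ParseTree R u)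
  | _, .starNil => []
  | _, .starCons (u := u) t t' => ⟨u, t⟩ :: t'.pieces

theorem flatten_map_fst_pieces : ∀ {w : List α} (t : ParseTree R.star w),
    (t.pieces.map Sigma.fst).flatten = w
  | _, .starNil => by simp [pieces]
  | _, .starCons _ t' => by simp [pieces, flatten_map_fst_pieces t']

theorem heq_of_pieces_eq : ∀ {w₁ w₂ : List α} (t₁ : ParseTree R.star w₁)
    (t₂ : ParseTree R.star w₂), t₁.pieces = t₂.pieces → HEq t₁ t₂
  | _, _, .starNil, .starNil, _ => .rfl
  | _, _, .starNil, .starCons _ _, h | _, _, .starCons _ _, .starNil, h => by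
    simp [pieces] at h
  | _, _, .starCons (v := v₁) t t', .starCons (v := v₂) s s', h => by
    simp only [pieces, List.cons.injEq, Sigma.mk.inj_iff] at h
    obtain ⟨⟨rfl, hts⟩, h'⟩ := h
    cases eq_of_heq hts
    obtain rfl : v₁ = v₂ := by
      rw [← flatten_map_fst_pieces t', h', flatten_map_fst_pieces]
    cases eq_of_heq (heq_of_pieces_eq t' s' h')
    rfl

theorem pieces_injective {w : List α} : Function.Injective (pieces (R := R) (w := w)) :=
  fun _ _ h => eq_of_heq (heq_of_pieces_eq _ _ h)

theorem fst_ne_nil_of_mem_pieces [IsEmpty (ParseTree R [])] :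
    ∀ {w : List α} (t : ParseTree R.star w), ∀ p ∈ t.pieces, p.1 ≠ []
  | _, .starNil => by simp [pieces]
  | _, .starCons t t' => by
    intro p hp
    simp only [pieces, List.mem_cons] at hp
    rcases hp with rfl | hp
    · rintro rfl
      exact IsEmpty.false t
    · exact fst_ne_nil_of_mem_pieces t' p hp

def append : {u v : List α} → ParseTree R.star u → ParseTree R.star v →
    ParseTree R.star (u ++ v)
  | _, _, .starNil, s => s
  | _, _, .starCons t t', s =>
    cast (by rw [List.append_assoc]) (starCons t (t'.append s))

theorem pieces_cast {u v : List α} (h : u = v) (t : ParseTree R.star u) :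
    (cast (congrArg _ h) t).pieces = t.pieces := by
  subst h; rfl

theorem pieces_append : ∀ {u v : List α} (t : ParseTree R.star u) (s : ParseTree R.star v),
    (t.append s).pieces = t.pieces ++ s.pieces
  | _, _, .starNil, _ => by simp [append, pieces]
  | _, _, .starCons t t', s => by
    rw [append, pieces_cast (List.append_assoc _ _ _).symm, pieces, pieces, pieces_append t' s,
      List.cons_append]

theorem append_injective2 [IsEmpty (ParseTree R [])] {u v : List α} :
    Function.Injective2 (append (R := R) (u := u) (v := v)) := by
  intro t₁ t₂ s₁ s₂ h
  have h' := congrArg pieces h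
  rw [pieces_append, pieces_append] at h'
  have hflat : (t₁.pieces.map Sigma.fst).flatten = (t₂.pieces.map Sigma.fst).flatten := by
    rw [flatten_map_fst_pieces, flatten_map_fst_pieces]
  have ht : t₁.pieces = t₂.pieces := by
    rcases List.prefix_or_prefix_of_prefix (h' ▸ List.prefix_append _ _)
      (List.prefix_append _ _) with hpre | hpre
    · exact List.eq_of_prefix_of_flatten_map_eq hpre (fst_ne_nil_of_mem_pieces t₂) hflat
    · exact (List.eq_of_prefix_of_flatten_map_eq hpre (fst_ne_nil_of_mem_pieces t₁)
        hflat.symm).symm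
  rw [ht, List.append_cancel_left_eq] at h'
  exact ⟨pieces_injective ht, pieces_injective h'⟩

def padLeft (e : ParseTree R []) {v : List α} (t : ParseTree R.star v) :
    ℕ → ParseTree R.star v
  | 0 => t
  | n + 1 => starCons e (padLeft e t n)

theorem length_pieces_padLeft (e : ParseTree R []) {v : List α} (t : ParseTree R.star v) :
    ∀ n, (padLeft e t n).pieces.length = n + t.pieces.length
  | 0 => (Nat.zero_add _).symm
  | n + 1 => by simp [padLeft, pieces, length_pieces_padLeft e t n]; omega

theorem padLeft_injective (e : ParseTree R []) {v : List α} (t : ParseTree R.star v) :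
    Function.Injective (padLeft e t) := fun m n h => by
  simpa [length_pieces_padLeft] using congrArg (fun t => t.pieces.length) h

end ParseTree

section
variable {R : RegularExpression α}

theorem hasAtLeastTrees_star_of_nonempty (e : ParseTree R []) {v : List α}
    (t : ParseTree R.star v) (k : ℕ) : HasAtLeastTrees R.star v k :=
  ⟨(List.range k).map (ParseTree.padLeft e t),
    List.nodup_range.map (ParseTree.padLeft_injective e t), by simp⟩

theorem HasAtLeastTrees.star_append {u v : List α} {k m : ℕ}
    (hu : HasAtLeastTrees R.star u k) (hv : HasAtLeastTrees R.star v m) :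
    HasAtLeastTrees R.star (u ++ v) (k * m) := by
  obtain ⟨l₁, hnd₁, hk⟩ := hu
  obtain ⟨l₂, hnd₂, hm⟩ := hv
  rcases isEmpty_or_nonempty (ParseTree R []) with hε | ⟨⟨e⟩⟩
  · have hinj : Function.Injective fun p : ParseTree R.star u × ParseTree R.star v =>
        p.1.append p.2 := fun _ _ h => Prod.ext_iff.2 (ParseTree.append_injective2 h)
    refine ⟨(l₁ ×ˢ l₂).map _, (hnd₁.product hnd₂).map hinj, ?_⟩
    rw [List.length_map, List.length_product]
    exact Nat.mul_le_mul hk hm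
  · rcases l₁ with _ | ⟨t, _⟩
    · exact ⟨[], List.nodup_nil, by simp_all⟩
    rcases l₂ with _ | ⟨s, _⟩
    · exact ⟨[], List.nodup_nil, by simp_all⟩
    exact hasAtLeastTrees_star_of_nonempty e (t.append s) _

end

/-- Claim from the proof sketch of Theorem 3: if `w` has at least `k` distinct
parse trees of `R*`, then `w ++ w` has at least `k²` distinct parse trees of
`R*`. -/
theorem stmt_14 {α : Type u} (R : RegularExpression α) (w : List α) (k : ℕ)
    (h : HasAtLeastTrees R.star w k) :
    HasAtLeastTrees R.star (w ++ w) (k ^ 2) :=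
  sq k ▸ h.star_append h
end
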